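/- arXiv:2101.02967 — 6 statements merged into one kernel-verified Lean document; each statement's English description precedes it below -/
import Mathlib

section
/- There is no square-summable family (x_{ℓ,m})_{(ℓ,m)∈S} (i.e., with ∑_{(ℓ,m)∈S} |x_{ℓ,m}|² < ∞) such that for every (ℓ,m) ∈ S one has C_{ℓ+1}·√((ℓ−m+1)(ℓ−m+2))·x_{ℓ+1,m−1} + C_ℓ·√((ℓ+m−1)(ℓ+m))·x_{ℓ−1,m−1} = δ_{(ℓ,m),(1,1)}, where x_{ℓ',m'} := 0 for (ℓ',m') ∉ S and δ is the Kronecker delta. Equivalently: the vector ξ_{1,1} is not in the image of the coefficientwise extension of ρ(F₊) to square-summable families, so the 1-cocycle c with c(F₊) = ξ_{1,1} is not a coboundary. -/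
noncomputable section

/-- The index set `S = {(ℓ,m) : 1 ≤ ℓ, |m| ≤ ℓ}` of the orthonormal basis `(ξ_{ℓ,m})`. -/
abbrev inS (p : ℤ × ℤ) : Prop := 1 ≤ p.1 ∧ |p.2| ≤ p.1

/-- `C ℓ = i √(ℓ²-1) / √(4ℓ²-1)`. -/
def C (ℓ : ℤ) : ℂ := Complex.I * (Real.sqrt ((ℓ : ℝ) ^ 2 - 1) / Real.sqrt (4 * (ℓ : ℝ) ^ 2 - 1))

/-- Real square root of an integer, viewed as a complex number. -/
def csqrt (a : ℤ) : ℂ := ((Real.sqrt (a : ℝ) : ℝ) : ℂ)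

/-!
Only the equations at `(ℓ, 1)` matter. At `ℓ = 1` the term in `x₀,₀` drops out because
`C₁ = 0`, leaving `C₂ √2 x₂,₀ = 1`; for `ℓ ≥ 2` both square roots equal `√(ℓ(ℓ+1))`, so
`C_{ℓ+1} x_{ℓ+1,0} = -C_ℓ x_{ℓ-1,0}`. Since `|C_ℓ|` increases with `ℓ`, the numbers
`|C_{2n+2} x_{2n+2,0}|` are nondecreasing, and as `|C_ℓ| ≤ 1` they bound `|x_{2n+2,0}|` from
below by `|C₂ x₂,₀| > 0`. So `|x|²` does not tend to zero along `(2n+2, 0)`, contradicting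
square-summability.
-/

lemma C_one : C 1 = 0 := by
  norm_num [C]

lemma norm_C (ℓ : ℤ) : ‖C ℓ‖ = √((ℓ : ℝ) ^ 2 - 1) / √(4 * (ℓ : ℝ) ^ 2 - 1) := by
  rw [C, norm_mul, Complex.norm_I, one_mul, ← Complex.ofReal_div, Complex.norm_real,
    Real.norm_of_nonneg (by positivity)]

lemma norm_C_le_one (ℓ : ℤ) : ‖C ℓ‖ ≤ 1 := by
  rw [norm_C]
  exact div_le_one_of_le₀ (Real.sqrt_le_sqrt (by nlinarith)) (Real.sqrt_nonneg _)

lemma norm_C_le_norm_C {a b : ℤ} (ha : 1 ≤ a) (hab : a ≤ b) : ‖C a‖ ≤ ‖C b‖ := by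
  have ha' : (1 : ℝ) ≤ a := by exact_mod_cast ha
  have hab' : (a : ℝ) ≤ b := by exact_mod_cast hab
  rw [norm_C, norm_C, ← Real.sqrt_div' _ (by nlinarith), ← Real.sqrt_div' _ (by nlinarith)]
  apply Real.sqrt_le_sqrt
  rw [div_le_div_iff₀ (by nlinarith) (by nlinarith)]
  nlinarith

lemma csqrt_ne_zero {a : ℤ} (ha : 0 < a) : csqrt a ≠ 0 := by
  rw [csqrt, Complex.ofReal_ne_zero]
  exact (Real.sqrt_pos.mpr (by exact_mod_cast ha)).ne'

/-- `ρ(F₊) x = ξ_{1,1}`, coefficientwise on `S`. -/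
def IsFplusPreimageXi11 (x : ℤ × ℤ → ℂ) : Prop :=
  ∀ ℓ m : ℤ, 1 ≤ ℓ → |m| ≤ ℓ →
    C (ℓ + 1) * csqrt ((ℓ - m + 1) * (ℓ - m + 2)) * x (ℓ + 1, m - 1)
      + C ℓ * csqrt ((ℓ + m - 1) * (ℓ + m)) * x (ℓ - 1, m - 1)
      = if (ℓ, m) = (1, 1) then 1 else 0

namespace IsFplusPreimageXi11

variable {x : ℤ × ℤ → ℂ}

lemma C_two_mul_ne_zero (hx : IsFplusPreimageXi11 x) : C 2 * x (2, 0) ≠ 0 := by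
  intro h
  have h11 := hx 1 1 le_rfl (by norm_num)
  norm_num [C_one] at h11
  rw [mul_right_comm, h, zero_mul] at h11
  exact zero_ne_one h11

lemma C_succ_mul_eq_neg (hx : IsFplusPreimageXi11 x) {ℓ : ℤ} (hℓ : 2 ≤ ℓ) :
    C (ℓ + 1) * x (ℓ + 1, 0) = -(C ℓ * x (ℓ - 1, 0)) := by
  have h := hx ℓ 1 (by omega) (by rw [abs_one]; omega)
  rw [if_neg (by simp only [Prod.mk.injEq]; omega), sub_self,
    show (ℓ - 1 + 1) * (ℓ - 1 + 2) = ℓ * (ℓ + 1) by ring,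
    show (ℓ + 1 - 1) * (ℓ + 1) = ℓ * (ℓ + 1) by ring] at h
  have hfactor : csqrt (ℓ * (ℓ + 1)) * (C (ℓ + 1) * x (ℓ + 1, 0) + C ℓ * x (ℓ - 1, 0)) = 0 := by
    linear_combination h
  exact eq_neg_of_add_eq_zero_left
    ((mul_eq_zero.mp hfactor).resolve_left (csqrt_ne_zero (by positivity)))

lemma monotone_norm_C_mul_even (hx : IsFplusPreimageXi11 x) :
    Monotone fun n : ℕ => ‖C (2 * n + 2) * x (2 * n + 2, 0)‖ := by
  refine monotone_nat_of_le_succ fun n => ?_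
  have h := hx.C_succ_mul_eq_neg (ℓ := 2 * n + 3) (by omega)
  rw [show (2 * n + 3 - 1 : ℤ) = 2 * n + 2 by ring] at h
  simp only [Nat.cast_succ]
  rw [show (2 * ((n : ℤ) + 1) + 2) = 2 * n + 3 + 1 by ring, h, norm_neg, norm_mul, norm_mul]
  gcongr
  exact norm_C_le_norm_C (by omega) (by omega)

lemma norm_C_two_mul_le (hx : IsFplusPreimageXi11 x) (n : ℕ) :
    ‖C 2 * x (2, 0)‖ ≤ ‖x (2 * n + 2, 0)‖ :=
  calc ‖C 2 * x (2, 0)‖ ≤ ‖C (2 * n + 2) * x (2 * n + 2, 0)‖ := by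
        simpa using hx.monotone_norm_C_mul_even (Nat.zero_le n)
    _ ≤ ‖x (2 * n + 2, 0)‖ := by
        rw [norm_mul]
        exact mul_le_of_le_one_left (norm_nonneg _) (norm_C_le_one _)

end IsFplusPreimageXi11

/-- There is no square-summable family `(x_{ℓ,m})` supported on `S` such that
`ρ(F₊) x = ξ_{1,1}` coefficientwise, i.e. such that for every `(ℓ,m) ∈ S`
`C_{ℓ+1} √((ℓ-m+1)(ℓ-m+2)) x_{ℓ+1,m-1} + C_ℓ √((ℓ+m-1)(ℓ+m)) x_{ℓ-1,m-1} = δ_{(ℓ,m),(1,1)}`.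
Hence `ξ_{1,1}` is not in the image of `ρ(F₊)`, so the 1-cocycle `c` with
`c(F₊) = ξ_{1,1}` is not a coboundary. -/
theorem xi11_not_in_image_of_Fplus :
    ¬ ∃ x : ℤ × ℤ → ℂ,
      (∀ p : ℤ × ℤ, ¬ inS p → x p = 0) ∧
      Summable (fun p : ℤ × ℤ => ‖x p‖ ^ 2) ∧
      (∀ ℓ m : ℤ, 1 ≤ ℓ → |m| ≤ ℓ →
        C (ℓ + 1) * csqrt ((ℓ - m + 1) * (ℓ - m + 2)) * x (ℓ + 1, m - 1)
          + C ℓ * csqrt ((ℓ + m - 1) * (ℓ + m)) * x (ℓ - 1, m - 1)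
          = if (ℓ, m) = (1, 1) then 1 else 0) := by
  rintro ⟨x, -, hsum, hx : IsFplusPreimageXi11 x⟩
  have hinj : Function.Injective fun n : ℕ => ((2 * n + 2 : ℤ), (0 : ℤ)) := by
    intro a b hab
    simp only [Prod.mk.injEq] at hab
    omega
  have htendsto := (hsum.comp_injective hinj).tendsto_atTop_zero
  have hpos : 0 < ‖C 2 * x (2, 0)‖ ^ 2 := by
    have := hx.C_two_mul_ne_zero
    positivity
  have hle : ‖C 2 * x (2, 0)‖ ^ 2 ≤ 0 :=
    ge_of_tendsto' htendsto fun n => pow_le_pow_left₀ (norm_nonneg _) (hx.norm_C_two_mul_le n) 2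
  linarith
end
end

section
/- The representation ρ = ρ₁₀ is a *-representation: for all φ, ψ ∈ D, ⟨ρ(H₃)φ, ψ⟩ = ⟨φ, ρ(H₃)ψ⟩, ⟨ρ(F₃)φ, ψ⟩ = ⟨φ, ρ(F₃)ψ⟩, ⟨ρ(H₊)φ, ψ⟩ = ⟨φ, ρ(H₋)ψ⟩, and ⟨ρ(F₊)φ, ψ⟩ = ⟨φ, ρ(F₋)ψ⟩, where ⟨·,·⟩ is the inner product on D making (ξ_{ℓ,m}) orthonormal. -/
noncomputable section

/-- The ambient space of finitely supported families; the representation space `D`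
is the subspace of families supported in `S`. -/
abbrev V := (ℤ × ℤ) →₀ ℂ

/-- The basis vector `ξ_{ℓ,m}`, with the convention `ξ_{ℓ,m} = 0` for `(ℓ,m) ∉ S`. -/
def ξ (ℓ m : ℤ) : V := if inS (ℓ, m) then Finsupp.single (ℓ, m) 1 else 0

/-- Build a linear operator on `V` from its values on the basis vectors `ξ_{ℓ,m}`,
`(ℓ,m) ∈ S` (and `0` on basis vectors outside `S`). -/
def mkOp (f : ℤ → ℤ → V) : V →ₗ[ℂ] V :=
  Finsupp.lsum ℂ fun p => LinearMap.toSpanSingleton ℂ V (if inS p then f p.1 p.2 else 0)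

/-- `ρ(H₃) ξ_{ℓ,m} = m ξ_{ℓ,m}`. -/
def rhoH3 : V →ₗ[ℂ] V := mkOp fun ℓ m => (m : ℂ) • ξ ℓ m

/-- `ρ(H₊) ξ_{ℓ,m} = √((ℓ-m)(ℓ+m+1)) ξ_{ℓ,m+1}`. -/
def rhoHp : V →ₗ[ℂ] V := mkOp fun ℓ m => csqrt ((ℓ - m) * (ℓ + m + 1)) • ξ ℓ (m + 1)

/-- `ρ(H₋) ξ_{ℓ,m} = √((ℓ+m)(ℓ-m+1)) ξ_{ℓ,m-1}`. -/
def rhoHm : V →ₗ[ℂ] V := mkOp fun ℓ m => csqrt ((ℓ + m) * (ℓ - m + 1)) • ξ ℓ (m - 1)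

/-- `ρ(F₃) ξ_{ℓ,m} = C_ℓ √(ℓ²-m²) ξ_{ℓ-1,m} - C_{ℓ+1} √((ℓ+1)²-m²) ξ_{ℓ+1,m}`. -/
def rhoF3 : V →ₗ[ℂ] V := mkOp fun ℓ m =>
  (C ℓ * csqrt (ℓ ^ 2 - m ^ 2)) • ξ (ℓ - 1) m
    - (C (ℓ + 1) * csqrt ((ℓ + 1) ^ 2 - m ^ 2)) • ξ (ℓ + 1) m

/-- `ρ(F₊) ξ_{ℓ,m} = C_ℓ √((ℓ-m)(ℓ-m-1)) ξ_{ℓ-1,m+1} + C_{ℓ+1} √((ℓ+m+1)(ℓ+m+2)) ξ_{ℓ+1,m+1}`. -/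
def rhoFp : V →ₗ[ℂ] V := mkOp fun ℓ m =>
  (C ℓ * csqrt ((ℓ - m) * (ℓ - m - 1))) • ξ (ℓ - 1) (m + 1)
    + (C (ℓ + 1) * csqrt ((ℓ + m + 1) * (ℓ + m + 2))) • ξ (ℓ + 1) (m + 1)

/-- `ρ(F₋) ξ_{ℓ,m} = -C_ℓ √((ℓ+m)(ℓ+m-1)) ξ_{ℓ-1,m-1} - C_{ℓ+1} √((ℓ-m+1)(ℓ-m+2)) ξ_{ℓ+1,m-1}`. -/
def rhoFm : V →ₗ[ℂ] V := mkOp fun ℓ m =>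
  -((C ℓ * csqrt ((ℓ + m) * (ℓ + m - 1))) • ξ (ℓ - 1) (m - 1))
    - (C (ℓ + 1) * csqrt ((ℓ - m + 1) * (ℓ - m + 2))) • ξ (ℓ + 1) (m - 1)

/-- The inner product on `D` making `(ξ_{ℓ,m})` orthonormal. -/
def inn (φ ψ : V) : ℂ := ∑' p : ℤ × ℤ, (starRingEnd ℂ) (φ p) * ψ p

/-! By sesquilinearity of `inn`, each identity reduces to basis vectors, i.e. to a symmetry of
matrix coefficients: `conj ⟨ξ_q, A ξ_p⟩ = ⟨ξ_p, B ξ_q⟩` for `p, q ∈ S`. For `H₃` and `H₊, H₋` the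
coefficients are real and the square roots match after the index shift. For `F₃` and `F₊, F₋`,
`C_ℓ` is purely imaginary, so conjugation flips its sign, which is exactly compensated by the
signs in front of the `C_ℓ` terms. -/

open ComplexConjugate
open Finsupp (single supported supported_eq_span_single notMem_support_iff)

lemma inn_eq_sum_support_left (φ ψ : V) : inn φ ψ = ∑ p ∈ φ.support, conj (φ p) * ψ p :=
  tsum_eq_sum fun p hp => by simp [notMem_support_iff.mp hp]

lemma inn_eq_sum_support_right (φ ψ : V) : inn φ ψ = ∑ p ∈ ψ.support, conj (φ p) * ψ p :=
  tsum_eq_sum fun p hp => by simp [notMem_support_iff.mp hp]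

def innSesq : V →ₗ⋆[ℂ] V →ₗ[ℂ] ℂ :=
  LinearMap.mk₂'ₛₗ (starRingEnd ℂ) (RingHom.id ℂ) inn
    (fun φ₁ φ₂ ψ => by
      simp only [inn_eq_sum_support_right, Finsupp.add_apply, map_add, add_mul,
        Finset.sum_add_distrib])
    (fun c φ ψ => by
      simp only [inn_eq_sum_support_right, Finsupp.smul_apply, smul_eq_mul, map_mul, Finset.mul_sum,
        mul_assoc])
    (fun φ ψ₁ ψ₂ => by
      simp only [inn_eq_sum_support_left, Finsupp.add_apply, mul_add, Finset.sum_add_distrib])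
    (fun c φ ψ => by
      simp only [inn_eq_sum_support_left, Finsupp.smul_apply, smul_eq_mul, RingHom.id_apply,
        Finset.mul_sum, mul_left_comm])

@[simp] lemma innSesq_apply (φ ψ : V) : innSesq φ ψ = inn φ ψ := rfl

lemma inn_single_one_left (p : ℤ × ℤ) (ψ : V) : inn (single p 1) ψ = ψ p := by
  simp [inn_eq_sum_support_left]

lemma inn_single_one_right (φ : V) (q : ℤ × ℤ) : inn φ (single q 1) = conj (φ q) := by
  simp [inn_eq_sum_support_right]

theorem inn_map_eq_inn_map_of_conj_apply_single {s : Set (ℤ × ℤ)} (A B : V →ₗ[ℂ] V)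
    (h : ∀ p ∈ s, ∀ q ∈ s, conj (A (single p 1) q) = B (single q 1) p)
    {φ ψ : V} (hφ : φ ∈ supported ℂ ℂ s) (hψ : ψ ∈ supported ℂ ℂ s) :
    inn (A φ) ψ = inn φ (B ψ) := by
  rw [supported_eq_span_single] at hφ hψ
  have h_single : ∀ p ∈ s, inn (A (single p 1)) ψ = inn (single p 1) (B ψ) := by
    intro p hp
    refine LinearMap.eqOn_span (f := innSesq (A (single p 1))) (g := (innSesq (single p 1)).comp B)
      ?_ hψ
    rintro _ ⟨q, hq, rfl⟩
    simp [inn_single_one_left, inn_single_one_right, h p hp q hq]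
  refine LinearMap.eqOn_span (f := (innSesq.flip ψ).comp A) (g := innSesq.flip (B ψ)) ?_ hφ
  rintro _ ⟨p, hp, rfl⟩
  exact h_single p hp

lemma mkOp_single_one (f : ℤ → ℤ → V) {p : ℤ × ℤ} (hp : inS p) :
    mkOp f (single p 1) = f p.1 p.2 := by
  simp [mkOp, hp]

lemma ξ_apply {q : ℤ × ℤ} (hq : inS q) (ℓ m : ℤ) : ξ ℓ m q = if (ℓ, m) = q then 1 else 0 := by
  unfold ξ
  split_ifs <;> simp_all

lemma conj_C (ℓ : ℤ) : conj (C ℓ) = -C ℓ := by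
  simp [C, Complex.conj_I]

lemma conj_csqrt (a : ℤ) : conj (csqrt a) = csqrt a := Complex.conj_ofReal _

lemma conj_rhoH3_apply_single {p q : ℤ × ℤ} (hp : inS p) (hq : inS q) :
    conj (rhoH3 (single p 1) q) = rhoH3 (single q 1) p := by
  simp only [rhoH3, mkOp_single_one _ hp, mkOp_single_one _ hq, Finsupp.smul_apply, smul_eq_mul,
    ξ_apply hp, ξ_apply hq, map_mul, map_intCast]
  split_ifs <;> simp_all

lemma conj_rhoHp_apply_single {p q : ℤ × ℤ} (hp : inS p) (hq : inS q) :
    conj (rhoHp (single p 1) q) = rhoHm (single q 1) p := by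
  obtain ⟨ℓ, m⟩ := p
  obtain ⟨ℓ', m'⟩ := q
  simp only [rhoHp, rhoHm, mkOp_single_one _ hp, mkOp_single_one _ hq, Finsupp.smul_apply,
    smul_eq_mul, ξ_apply hp, ξ_apply hq, map_mul, conj_csqrt, Prod.mk.injEq]
  split_ifs <;> (try casesm* _ ∧ _) <;> (try subst_vars) <;>
    first | omega | (simp only [map_one, map_zero]; ring_nf)

lemma conj_rhoF3_apply_single {p q : ℤ × ℤ} (hp : inS p) (hq : inS q) :
    conj (rhoF3 (single p 1) q) = rhoF3 (single q 1) p := by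
  obtain ⟨ℓ, m⟩ := p
  obtain ⟨ℓ', m'⟩ := q
  simp only [rhoF3, mkOp_single_one _ hp, mkOp_single_one _ hq, Finsupp.sub_apply,
    Finsupp.smul_apply, smul_eq_mul, ξ_apply hp, ξ_apply hq, map_sub, map_mul, conj_csqrt, conj_C,
    Prod.mk.injEq]
  split_ifs <;> (try casesm* _ ∧ _) <;> (try subst_vars) <;>
    first | omega | (simp only [map_one, map_zero]; ring_nf)

lemma conj_rhoFp_apply_single {p q : ℤ × ℤ} (hp : inS p) (hq : inS q) :
    conj (rhoFp (single p 1) q) = rhoFm (single q 1) p := by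
  obtain ⟨ℓ, m⟩ := p
  obtain ⟨ℓ', m'⟩ := q
  simp only [rhoFp, rhoFm, mkOp_single_one _ hp, mkOp_single_one _ hq, Finsupp.add_apply,
    Finsupp.sub_apply, Finsupp.neg_apply, Finsupp.smul_apply, smul_eq_mul, ξ_apply hp, ξ_apply hq,
    map_add, map_mul, conj_csqrt, conj_C, Prod.mk.injEq]
  split_ifs <;> (try casesm* _ ∧ _) <;> (try subst_vars) <;>
    first | omega | (simp only [map_one, map_zero]; ring_nf)

/-- `ρ₁₀` is a *-representation: on the subspace `D` of families supported in `S`,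
`ρ(H₃)` and `ρ(F₃)` are symmetric and `ρ(H₊)` (resp. `ρ(F₊)`) is adjoint to `ρ(H₋)`
(resp. `ρ(F₋)`) with respect to the inner product making `(ξ_{ℓ,m})` orthonormal. -/
theorem rho10_star_representation :
    ∀ φ ∈ Finsupp.supported ℂ ℂ {p : ℤ × ℤ | inS p},
    ∀ ψ ∈ Finsupp.supported ℂ ℂ {p : ℤ × ℤ | inS p},
      inn (rhoH3 φ) ψ = inn φ (rhoH3 ψ) ∧
      inn (rhoF3 φ) ψ = inn φ (rhoF3 ψ) ∧
      inn (rhoHp φ) ψ = inn φ (rhoHm ψ) ∧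
      inn (rhoFp φ) ψ = inn φ (rhoFm ψ) := by
  intro φ hφ ψ hψ
  exact ⟨inn_map_eq_inn_map_of_conj_apply_single _ _
      (fun _ hp _ hq => conj_rhoH3_apply_single hp hq) hφ hψ,
    inn_map_eq_inn_map_of_conj_apply_single _ _
      (fun _ hp _ hq => conj_rhoF3_apply_single hp hq) hφ hψ,
    inn_map_eq_inn_map_of_conj_apply_single _ _
      (fun _ hp _ hq => conj_rhoHp_apply_single hp hq) hφ hψ,
    inn_map_eq_inn_map_of_conj_apply_single _ _
      (fun _ hp _ hq => conj_rhoFp_apply_single hp hq) hφ hψ⟩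

end
end

section
/- With the vectors c(H₃) = c(H₊) = c(H₋) = 0, c(F₃) = −(1/√2)·ξ_{1,0}, c(F₊) = ξ_{1,1}, c(F₋) = −ξ_{1,−1} in D, one has ⟨c(X*), c(Y)⟩ = ⟨c(Y*), c(X)⟩ for all X, Y in the generating set {H₃, H₊, H₋, F₃, F₊, F₋}, where the involution * fixes H₃ and F₃ and exchanges H₊ ↔ H₋ and F₊ ↔ F₋. Consequently, the unique linear functional ψ in the Schürmann triple (ρ₁₀, c, ψ) determined by ψ([X,Y]) = ⟨c(Y*), c(X)⟩ − ⟨c(X*), c(Y)⟩ vanishes identically on so(3,1). -/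
noncomputable section

/-- The six generators `H₃, H₊, H₋, F₃, F₊, F₋` of `so(3,1)`. -/
inductive Gen : Type
  | H3 | Hp | Hm | F3 | Fp | Fm
  deriving DecidableEq

instance : Fintype Gen where
  elems := {Gen.H3, Gen.Hp, Gen.Hm, Gen.F3, Gen.Fp, Gen.Fm}
  complete := fun x => by cases x <;> simp

open Gen

/-- The involution: `H₃* = H₃`, `F₃* = F₃`, `H₊* = H₋`, `F₊* = F₋`. -/
def starGen : Gen → Gen
  | H3 => H3
  | Hp => Hm
  | Hm => Hp
  | F3 => F3
  | Fp => Fm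
  | Fm => Fp

/-- The cocycle `c` on the generators. -/
def cvec : Gen → V
  | H3 => 0
  | Hp => 0
  | Hm => 0
  | F3 => -(((Real.sqrt 2 : ℝ) : ℂ))⁻¹ • ξ 1 0
  | Fp => ξ 1 1
  | Fm => -ξ 1 (-1)

/-- Indicator basis functional on generators. -/
def eGen (W : Gen) : Gen → ℂ := fun Z => if Z = W then 1 else 0

/-- The structure constants of `so(3,1)` in the basis `H₃, H₊, H₋, F₃, F₊, F₋`:
`brk X Y Z` is the coefficient of `Z` in `[X,Y]`. -/
def brk : Gen → Gen → Gen → ℂ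
  | Hp, Hm => (2 : ℂ) • eGen H3
  | Hm, Hp => (-2 : ℂ) • eGen H3
  | Fp, Fm => (-2 : ℂ) • eGen H3
  | Fm, Fp => (2 : ℂ) • eGen H3
  | H3, Hp => eGen Hp
  | Hp, H3 => -eGen Hp
  | H3, Hm => -eGen Hm
  | Hm, H3 => eGen Hm
  | F3, Fp => -eGen Hp
  | Fp, F3 => eGen Hp
  | F3, Fm => eGen Hm
  | Fm, F3 => -eGen Hm
  | H3, Fp => eGen Fp
  | Fp, H3 => -eGen Fp
  | H3, Fm => -eGen Fm
  | Fm, H3 => eGen Fm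
  | F3, Hp => eGen Fp
  | Hp, F3 => -eGen Fp
  | F3, Hm => -eGen Fm
  | Hm, F3 => eGen Fm
  | Hp, Fm => eGen F3
  | Fm, Hp => -eGen F3
  | Hm, Fp => -eGen F3
  | Fp, Hm => eGen F3
  | _, _ => 0

/-! The vectors `c(F₃)`, `c(F₊)`, `c(F₋)` are multiples of distinct basis vectors, so
`⟨c(X*), c(Y)⟩` vanishes unless `Y = X*`, and the surviving values `⟨c(F₃), c(F₃)⟩ = 1/2`,
`⟨c(F₋), c(F₋)⟩ = ⟨c(F₊), c(F₊)⟩ = 1` are symmetric under `X ↔ Y`. Hence the right-hand side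
of the defining relation of `ψ` is zero, so `ψ` kills every bracket; since each generator of
`so(3,1)` is a nonzero multiple of a single bracket, `ψ = 0`. -/

lemma inn_single_left (p : ℤ × ℤ) (a : ℂ) (w : V) :
    inn (Finsupp.single p a) w = starRingEnd ℂ a * w p := by
  unfold inn
  rw [tsum_eq_single p fun q hq => by simp [Ne.symm hq]]
  simp

lemma inn_zero_left (w : V) : inn 0 w = 0 := by
  simp [inn]

lemma inn_neg_left (φ w : V) : inn (-φ) w = -inn φ w := by
  simp only [inn, Finsupp.neg_apply, map_neg, neg_mul, tsum_neg]

lemma ξ_of_inS {ℓ m : ℤ} (h : inS (ℓ, m)) : ξ ℓ m = Finsupp.single (ℓ, m) 1 :=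
  if_pos h

lemma cvec_F3 : cvec F3 = Finsupp.single (1, 0) (-(((Real.sqrt 2 : ℝ) : ℂ))⁻¹) := by
  rw [cvec, ξ_of_inS (by decide), Finsupp.smul_single, smul_eq_mul, mul_one]

lemma cvec_Fp : cvec Fp = Finsupp.single (1, 1) 1 :=
  ξ_of_inS (by decide)

lemma cvec_Fm : cvec Fm = Finsupp.single (1, -1) (-1) := by
  rw [cvec, ξ_of_inS (by decide), Finsupp.single_neg]

lemma inn_cvec_starGen_comm (X Y : Gen) :
    inn (cvec (starGen X)) (cvec Y) = inn (cvec (starGen Y)) (cvec X) := by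
  cases X <;> cases Y <;>
    simp [starGen, cvec_F3, cvec_Fp, cvec_Fm, cvec.eq_1, cvec.eq_2, cvec.eq_3, inn_zero_left,
      inn_single_left, inn_neg_left]

lemma sum_eGen_mul (W : Gen) (ψ : Gen → ℂ) : ∑ Z, eGen W Z * ψ Z = ψ W := by
  simp [eGen]

lemma exists_brk_eq_smul_eGen (W : Gen) : ∃ X Y : Gen, ∃ a : ℂ, a ≠ 0 ∧ brk X Y = a • eGen W := by
  cases W
  · exact ⟨Hp, Hm, 2, two_ne_zero, rfl⟩
  · exact ⟨H3, Hp, 1, one_ne_zero, (one_smul _ _).symm⟩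
  · exact ⟨Hm, H3, 1, one_ne_zero, (one_smul _ _).symm⟩
  · exact ⟨Hp, Fm, 1, one_ne_zero, (one_smul _ _).symm⟩
  · exact ⟨H3, Fp, 1, one_ne_zero, (one_smul _ _).symm⟩
  · exact ⟨Fm, H3, 1, one_ne_zero, (one_smul _ _).symm⟩

lemma eq_zero_of_sum_brk_mul_eq_zero {ψ : Gen → ℂ}
    (hψ : ∀ X Y : Gen, ∑ Z, brk X Y Z * ψ Z = 0) (W : Gen) : ψ W = 0 := by
  obtain ⟨X, Y, a, ha, hXY⟩ := exists_brk_eq_smul_eGen W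
  have hsum := hψ X Y
  simp only [hXY, Pi.smul_apply, smul_eq_mul, mul_assoc, ← Finset.mul_sum, sum_eGen_mul] at hsum
  exact (mul_eq_zero.mp hsum).resolve_left ha

/-- With the cocycle `c` as above, `⟨c(X*), c(Y)⟩ = ⟨c(Y*), c(X)⟩` for all generators
`X, Y`; consequently, the unique linear functional `ψ` of the Schürmann triple
`(ρ₁₀, c, ψ)`, determined on brackets by `ψ([X,Y]) = ⟨c(Y*), c(X)⟩ - ⟨c(X*), c(Y)⟩`,
vanishes identically on `so(3,1)`. -/
theorem psi_vanishes :
    (∀ X Y : Gen, inn (cvec (starGen X)) (cvec Y) = inn (cvec (starGen Y)) (cvec X)) ∧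
    (∀ ψ : Gen → ℂ,
      (∀ X Y : Gen, ∑ Z : Gen, brk X Y Z * ψ Z
          = inn (cvec (starGen Y)) (cvec X) - inn (cvec (starGen X)) (cvec Y)) →
      ∀ Z : Gen, ψ Z = 0) :=
  ⟨inn_cvec_starGen_comm, fun _ hψ => eq_zero_of_sum_brk_mul_eq_zero fun X Y => by
    rw [hψ X Y, inn_cvec_starGen_comm X Y, sub_self]⟩

end
end

section
/- The Casimir element J₂ acts as zero in the representation ρ₁₀: as an operator identity on D, ρ(H₊)ρ(F₋) + ρ(H₋)ρ(F₊) + ρ(F₊)ρ(H₋) + ρ(F₋)ρ(H₊) + 4·ρ(F₃)ρ(H₃) = 0. -/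
/-!
On `ξ_{ℓ,m}` the operator `J₂` only produces multiples of `ξ_{ℓ-1,m}` and `ξ_{ℓ+1,m}`.
By `√(xy) √(yz) = y √(xz)`, each of the four products `H_± F_∓`, `F_± H_∓` contributes
`C_ℓ √((ℓ+m)(ℓ-m))` (resp. `C_{ℓ+1} √((ℓ+m+1)(ℓ-m+1))`) times a linear factor in `ℓ ± m`,
and together with the `4m` coming from `4 F₃ H₃` these factors cancel because
`(ℓ+m) - (ℓ-m) = 2m`. At the boundary of `S` the defining formulas vanish by themselves
(through `C₁ = 0` or a vanishing square root), so each operator acts on every `ξ_{ℓ,m}` by its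
formula.
-/

noncomputable section

lemma inS_iff {ℓ m : ℤ} : inS (ℓ, m) ↔ 1 ≤ ℓ ∧ -ℓ ≤ m ∧ m ≤ ℓ := by
  rw [inS, abs_le]

lemma ξ_eq_zero_of_not_inS {ℓ m : ℤ} (h : ¬ inS (ℓ, m)) : ξ ℓ m = 0 := if_neg h

lemma smul_ξ_eq_zero {c : ℂ} {ℓ m : ℤ} (h : inS (ℓ, m) → c = 0) : c • ξ ℓ m = 0 := by
  by_cases hS : inS (ℓ, m)
  · rw [h hS, zero_smul]
  · rw [ξ_eq_zero_of_not_inS hS, smul_zero]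

lemma mkOp_single (f : ℤ → ℤ → V) (p : ℤ × ℤ) :
    mkOp f (Finsupp.single p 1) = if inS p then f p.1 p.2 else 0 := by
  simp [mkOp]

lemma mkOp_ξ {f : ℤ → ℤ → V} (hf : ∀ ℓ m, ¬ inS (ℓ, m) → f ℓ m = 0) (ℓ m : ℤ) :
    mkOp f (ξ ℓ m) = f ℓ m := by
  by_cases h : inS (ℓ, m)
  · rw [ξ, if_pos h, mkOp_single, if_pos h]
  · rw [ξ_eq_zero_of_not_inS h, map_zero, hf ℓ m h]

lemma csqrt_of_nonpos {a : ℤ} (ha : a ≤ 0) : csqrt a = 0 := by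
  rw [csqrt, Complex.ofReal_eq_zero, Real.sqrt_eq_zero']
  exact_mod_cast ha

lemma csqrt_mul_csqrt_mul (x y z : ℤ) (hx : 0 ≤ x) (hy : 0 ≤ y ∨ x = 0) :
    csqrt (x * y) * csqrt (y * z) = y * csqrt (x * z) := by
  obtain hy | rfl := hy
  · have hx' : (0 : ℝ) ≤ x := Int.cast_nonneg hx
    have hy' : (0 : ℝ) ≤ y := Int.cast_nonneg hy
    have key : √((x : ℝ) * y) * √((y : ℝ) * z) = y * √((x : ℝ) * z) := calc
      _ = √(((x : ℝ) * y) * (y * z)) := (Real.sqrt_mul (by positivity) _).symm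
      _ = √((y : ℝ) ^ 2 * (x * z)) := by ring_nf
      _ = y * √((x : ℝ) * z) := by rw [Real.sqrt_mul (sq_nonneg _), Real.sqrt_sq hy']
    simp only [csqrt, Int.cast_mul]
    exact_mod_cast congrArg ((↑) : ℝ → ℂ) key
  · simp [csqrt]

lemma rhoH3_ξ (ℓ m : ℤ) : rhoH3 (ξ ℓ m) = (m : ℂ) • ξ ℓ m :=
  mkOp_ξ (fun ℓ m h => by rw [ξ_eq_zero_of_not_inS h, smul_zero]) ℓ m

lemma rhoHp_ξ (ℓ m : ℤ) : rhoHp (ξ ℓ m) = csqrt ((ℓ - m) * (ℓ + m + 1)) • ξ ℓ (m + 1) := by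
  refine mkOp_ξ (fun ℓ m h => smul_ξ_eq_zero fun h' => csqrt_of_nonpos ?_) ℓ m
  rw [inS_iff] at h h'
  rw [show ℓ + m + 1 = 0 by omega, mul_zero]

lemma rhoHm_ξ (ℓ m : ℤ) : rhoHm (ξ ℓ m) = csqrt ((ℓ + m) * (ℓ - m + 1)) • ξ ℓ (m - 1) := by
  refine mkOp_ξ (fun ℓ m h => smul_ξ_eq_zero fun h' => csqrt_of_nonpos ?_) ℓ m
  rw [inS_iff] at h h'
  rw [show ℓ - m + 1 = 0 by omega, mul_zero]

lemma rhoF3_ξ (ℓ m : ℤ) : rhoF3 (ξ ℓ m) =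
    (C ℓ * csqrt (ℓ ^ 2 - m ^ 2)) • ξ (ℓ - 1) m
      - (C (ℓ + 1) * csqrt ((ℓ + 1) ^ 2 - m ^ 2)) • ξ (ℓ + 1) m := by
  refine mkOp_ξ (fun ℓ m h => ?_) ℓ m
  rw [inS_iff] at h
  rw [smul_ξ_eq_zero fun h' => by rw [inS_iff] at h'; omega, zero_sub, neg_eq_zero]
  refine smul_ξ_eq_zero fun h' => ?_
  rw [inS_iff] at h'
  obtain rfl | rfl | rfl : ℓ = 0 ∨ m = ℓ + 1 ∨ m = -(ℓ + 1) := by omega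
  · rw [zero_add, C_one, zero_mul]
  all_goals rw [csqrt_of_nonpos (le_of_eq (by ring)), mul_zero]

lemma rhoFp_ξ (ℓ m : ℤ) : rhoFp (ξ ℓ m) =
    (C ℓ * csqrt ((ℓ - m) * (ℓ - m - 1))) • ξ (ℓ - 1) (m + 1)
      + (C (ℓ + 1) * csqrt ((ℓ + m + 1) * (ℓ + m + 2))) • ξ (ℓ + 1) (m + 1) := by
  refine mkOp_ξ (fun ℓ m h => ?_) ℓ m
  rw [inS_iff] at h
  rw [smul_ξ_eq_zero fun h' => by rw [inS_iff] at h'; omega, zero_add]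
  refine smul_ξ_eq_zero fun h' => ?_
  rw [inS_iff] at h'
  obtain rfl | hm : ℓ = 0 ∨ (ℓ + m + 1) * (ℓ + m + 2) = 0 := by
    simp only [mul_eq_zero]; omega
  · rw [zero_add, C_one, zero_mul]
  · rw [csqrt_of_nonpos hm.le, mul_zero]

lemma rhoFm_ξ (ℓ m : ℤ) : rhoFm (ξ ℓ m) =
    -((C ℓ * csqrt ((ℓ + m) * (ℓ + m - 1))) • ξ (ℓ - 1) (m - 1))
      - (C (ℓ + 1) * csqrt ((ℓ - m + 1) * (ℓ - m + 2))) • ξ (ℓ + 1) (m - 1) := by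
  refine mkOp_ξ (fun ℓ m h => ?_) ℓ m
  rw [inS_iff] at h
  rw [smul_ξ_eq_zero fun h' => by rw [inS_iff] at h'; omega, neg_zero, zero_sub, neg_eq_zero]
  refine smul_ξ_eq_zero fun h' => ?_
  rw [inS_iff] at h'
  obtain rfl | hm : ℓ = 0 ∨ (ℓ - m + 1) * (ℓ - m + 2) = 0 := by
    simp only [mul_eq_zero]; omega
  · rw [zero_add, C_one, zero_mul]
  · rw [csqrt_of_nonpos hm.le, mul_zero]

def rhoJ2 : V →ₗ[ℂ] V :=
  rhoHp ∘ₗ rhoFm + rhoHm ∘ₗ rhoFp + rhoFp ∘ₗ rhoHm + rhoFm ∘ₗ rhoHp + (4 : ℂ) • (rhoF3 ∘ₗ rhoH3)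

lemma rhoJ2_ξ {ℓ m : ℤ} (h : inS (ℓ, m)) : rhoJ2 (ξ ℓ m) = 0 := by
  rw [inS_iff] at h
  have p₁ := csqrt_mul_csqrt_mul (ℓ + m) (ℓ + m - 1) (ℓ - m) (by omega) (by omega)
  have p₂ := csqrt_mul_csqrt_mul (ℓ - m) (ℓ - m - 1) (ℓ + m) (by omega) (by omega)
  have p₃ := csqrt_mul_csqrt_mul (ℓ + m) (ℓ - m + 1) (ℓ - m) (by omega) (by omega)
  have p₄ := csqrt_mul_csqrt_mul (ℓ - m) (ℓ + m + 1) (ℓ + m) (by omega) (by omega)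
  have q₁ := csqrt_mul_csqrt_mul (ℓ - m + 1) (ℓ - m + 2) (ℓ + m + 1) (by omega) (by omega)
  have q₂ := csqrt_mul_csqrt_mul (ℓ + m + 1) (ℓ + m + 2) (ℓ - m + 1) (by omega) (by omega)
  have q₃ := csqrt_mul_csqrt_mul (ℓ - m + 1) (ℓ + m) (ℓ + m + 1) (by omega) (by omega)
  have q₄ := csqrt_mul_csqrt_mul (ℓ + m + 1) (ℓ - m) (ℓ - m + 1) (by omega) (by omega)
  push_cast at p₁ p₂ p₃ p₄ q₁ q₂ q₃ q₄
  simp only [rhoJ2, LinearMap.add_apply, LinearMap.comp_apply, LinearMap.smul_apply, rhoH3_ξ,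
    rhoHp_ξ, rhoHm_ξ, rhoF3_ξ, rhoFp_ξ, rhoFm_ξ, map_add, map_sub, map_neg, map_smul,
    sub_add_cancel, add_sub_cancel_right]
  linear_combination (norm := skip)
    (C ℓ * (-p₁ + p₂ + p₃ - p₄)) • ξ (ℓ - 1) m + (C (ℓ + 1) * (-q₁ + q₂ + q₃ - q₄)) • ξ (ℓ + 1) m
  -- `ring_nf` also normalises the integer arguments of `csqrt`, identifying the shifted
  -- coefficients of the two-step actions with the products in `p₁, …, q₄`.
  match_scalars <;> ring_nf

/-- The Casimir element `J₂ = H₊F₋ + H₋F₊ + F₊H₋ + F₋H₊ + 4F₃H₃` acts as zero in the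
representation `ρ₁₀` (corresponding to the scalar `i ℓ₀ ℓ₁` with `ℓ₀ = 1, ℓ₁ = 0`). -/
theorem casimir_J2_acts_as_zero :
    rhoHp ∘ₗ rhoFm + rhoHm ∘ₗ rhoFp + rhoFp ∘ₗ rhoHm + rhoFm ∘ₗ rhoHp
      + (4 : ℂ) • (rhoF3 ∘ₗ rhoH3) = 0 := by
  change rhoJ2 = 0
  refine Finsupp.lhom_ext' fun p => LinearMap.ext_ring ?_
  rw [LinearMap.zero_comp, LinearMap.comp_apply, Finsupp.lsingle_apply, LinearMap.zero_apply]
  by_cases h : inS p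
  · simpa only [ξ, if_pos h] using rhoJ2_ξ h
  · simp only [rhoJ2, LinearMap.add_apply, LinearMap.comp_apply, LinearMap.smul_apply, rhoH3,
      rhoHp, rhoHm, rhoFp, rhoFm, mkOp_single, if_neg h, map_zero, smul_zero, add_zero]

end
end

section
/- Let (x_ℓ)_{ℓ≥1} be the sequence of real numbers defined by x₁ = 1, x₂ = 0, and for ℓ ≥ 2, x_{ℓ+1} = −[ √(ℓ²−1)·√(4(ℓ+1)²−1) / ( √(4ℓ²−1)·√((ℓ+1)²−1) ) ] · [ √((ℓ−1)ℓ) / √((ℓ+1)(ℓ+2)) ] · x_{ℓ−1} (this is the recurrence C_{ℓ+1}·√((ℓ+1)(ℓ+2))·x_{ℓ+1} + C_ℓ·√((ℓ−1)ℓ)·x_{ℓ−1} = 0). Then ∑_{ℓ≥1} x_ℓ² < ∞. Consequently ξ⁺ := (x_{ℓ,m}) with x_{ℓ,1} = x_ℓ and x_{ℓ,m} = 0 for m ≠ 1 is a nonzero square-summable family on S satisfying, coefficientwise, ρ(H₃)ξ⁺ = ξ⁺ and ρ(F₋)ξ⁺ = 0. -/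
/-!
Squaring the recurrence, the weight `ℓ(ℓ+1) x_ℓ²` cannot increase from `ℓ-1` to `ℓ+1`: it gets
multiplied by `(ℓ²-1)(4(ℓ+1)²-1) / ((4ℓ²-1)((ℓ+1)²-1)) ≤ 1`. Hence `x_ℓ² = O(ℓ⁻²)` is summable.
The vector `ξ⁺` is supported on the column `m = 1`, so `H₃` fixes it, and the only nontrivial
coefficient of `F₋ξ⁺` (at `m = 0`) is the recurrence multiplied by `C (ℓ+1) √((ℓ+1)(ℓ+2))`.
-/

noncomputable section

theorem le_max_of_forall_le_two_step {α : Type*} [LinearOrder α] {v : ℕ → α}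
    (hv : ∀ n, v (n + 2) ≤ v n) (n : ℕ) : v n ≤ max (v 0) (v 1) := by
  induction n using Nat.twoStepInduction with
  | zero => exact le_max_left _ _
  | one => exact le_max_right _ _
  | more n ih _ => exact (hv n).trans ih

/-- `recCoeff ℓ = -C ℓ √((ℓ-1)ℓ) / (C (ℓ+1) √((ℓ+1)(ℓ+2)))`; the recurrence hypothesis is
`x (ℓ + 1) = recCoeff ℓ * x (ℓ - 1)` up to unfolding. -/
def recCoeff (L : ℝ) : ℝ :=
  -(√(L ^ 2 - 1) * √(4 * (L + 1) ^ 2 - 1) / (√(4 * L ^ 2 - 1) * √((L + 1) ^ 2 - 1))) *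
    (√((L - 1) * L) / √((L + 1) * (L + 2)))

theorem add_one_mul_add_two_mul_recCoeff_sq_le {L : ℝ} (hL : 1 ≤ L) :
    (L + 1) * (L + 2) * recCoeff L ^ 2 ≤ (L - 1) * L := by
  have hsq : recCoeff L ^ 2 = (L ^ 2 - 1) * (4 * (L + 1) ^ 2 - 1) * ((L - 1) * L) /
      ((4 * L ^ 2 - 1) * ((L + 1) ^ 2 - 1) * ((L + 1) * (L + 2))) := by
    simp only [recCoeff, neg_mul, neg_sq, mul_pow, div_pow]
    rw [Real.sq_sqrt (by nlinarith), Real.sq_sqrt (by nlinarith), Real.sq_sqrt (by nlinarith),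
      Real.sq_sqrt (by nlinarith), Real.sq_sqrt (by nlinarith), Real.sq_sqrt (by nlinarith)]
    field_simp
  -- `(4L²-1)((L+1)²-1) - (L²-1)(4(L+1)²-1) = 6L+3`
  have hgap : 0 ≤ (L - 1) * L * ((L + 1) * (L + 2)) * (6 * L + 3) := by
    have : 0 ≤ L - 1 := by linarith
    positivity
  have hden : 0 < (4 * L ^ 2 - 1) * ((L + 1) ^ 2 - 1) * ((L + 1) * (L + 2)) := by
    have : 0 < 4 * L ^ 2 - 1 := by nlinarith
    have : 0 < (L + 1) ^ 2 - 1 := by nlinarith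
    positivity
  rw [hsq, mul_div_assoc', div_le_iff₀ hden]
  nlinarith [hgap]

theorem sqrt_mul_recCoeff_eq_neg {L : ℝ} (hL : 1 ≤ L) :
    √((L + 1) ^ 2 - 1) / √(4 * (L + 1) ^ 2 - 1) * √((L + 1) * (L + 2)) * recCoeff L =
      -(√(L ^ 2 - 1) / √(4 * L ^ 2 - 1) * √((L - 1) * L)) := by
  have h1 : √(4 * (L + 1) ^ 2 - 1) ≠ 0 := (Real.sqrt_pos.2 (by nlinarith)).ne'
  have h2 : √((L + 1) ^ 2 - 1) ≠ 0 := (Real.sqrt_pos.2 (by nlinarith)).ne'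
  have h3 : √((L + 1) * (L + 2)) ≠ 0 := (Real.sqrt_pos.2 (by nlinarith)).ne'
  unfold recCoeff
  generalize √(4 * (L + 1) ^ 2 - 1) = a at *
  generalize √((L + 1) ^ 2 - 1) = b at *
  generalize √((L + 1) * (L + 2)) = c at *
  field_simp

theorem C_mul_csqrt_mul_recCoeff (n : ℕ) (hn : 1 ≤ n) :
    C (n + 1) * csqrt ((n + 1) * (n + 2)) * (recCoeff n : ℂ) = -(C n * csqrt ((n - 1) * n)) := by
  have key := congrArg (fun r : ℝ => Complex.I * (r : ℂ))
    (sqrt_mul_recCoeff_eq_neg (L := n) (by exact_mod_cast hn))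
  simp only [C, csqrt]
  push_cast at key ⊢
  linear_combination key

section Recurrence

variable {x : ℕ → ℝ}

theorem add_one_mul_add_two_mul_sq_le (hrec : ∀ ℓ : ℕ, 2 ≤ ℓ → x (ℓ + 1) = recCoeff ℓ * x (ℓ - 1))
    (n : ℕ) : ((n : ℝ) + 1) * (n + 2) * x (n + 1) ^ 2 ≤ max (2 * x 1 ^ 2) (6 * x 2 ^ 2) := by
  have step : ∀ n : ℕ, ((n + 2 : ℕ) + 1 : ℝ) * ((n + 2 : ℕ) + 2) * x (n + 2 + 1) ^ 2 ≤
      ((n : ℝ) + 1) * (n + 2) * x (n + 1) ^ 2 := by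
    intro n
    have hL : (1 : ℝ) ≤ (n + 2 : ℕ) := by push_cast; linarith [n.cast_nonneg (α := ℝ)]
    rw [hrec (n + 2) (by omega), mul_pow, ← mul_assoc]
    calc _ ≤ ((n + 2 : ℕ) - 1 : ℝ) * (n + 2 : ℕ) * x (n + 2 - 1) ^ 2 :=
          mul_le_mul_of_nonneg_right (add_one_mul_add_two_mul_recCoeff_sq_le hL) (sq_nonneg _)
      _ = _ := by push_cast; ring
  exact (le_max_of_forall_le_two_step
    (v := fun n : ℕ => ((n : ℝ) + 1) * (n + 2) * x (n + 1) ^ 2) step n).trans_eq (by norm_num)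

theorem summable_sq_of_recurrence (hrec : ∀ ℓ : ℕ, 2 ≤ ℓ → x (ℓ + 1) = recCoeff ℓ * x (ℓ - 1)) :
    Summable (fun n : ℕ => x (n + 1) ^ 2) := by
  set K := max (2 * x 1 ^ 2) (6 * x 2 ^ 2)
  have hp : Summable (fun n : ℕ => K * (1 / ((n + 1 : ℕ) : ℝ) ^ 2)) :=
    ((summable_nat_add_iff 1).2 (Real.summable_one_div_nat_pow.2 one_lt_two)).mul_left K
  refine hp.of_nonneg_of_le (fun n => sq_nonneg _) fun n => ?_
  have hb := add_one_mul_add_two_mul_sq_le hrec n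
  have hn : (0 : ℝ) ≤ n := n.cast_nonneg
  rw [mul_one_div, le_div_iff₀ (by positivity)]
  push_cast
  nlinarith [sq_nonneg (x (n + 1))]

end Recurrence

def xiPlus (x : ℕ → ℝ) (p : ℤ × ℤ) : ℂ :=
  if 1 ≤ p.1 ∧ p.2 = 1 then ((x p.1.toNat : ℝ) : ℂ) else 0

section XiPlus

variable {x : ℕ → ℝ}

theorem xiPlus_of_snd_ne_one {p : ℤ × ℤ} (h : p.2 ≠ 1) : xiPlus x p = 0 :=
  if_neg fun h' => h h'.2

theorem xiPlus_of_fst_lt_one {p : ℤ × ℤ} (h : p.1 < 1) : xiPlus x p = 0 :=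
  if_neg fun h' => (h.trans_le h'.1).false

theorem xiPlus_natCast (n : ℕ) (hn : 1 ≤ n) : xiPlus x (n, 1) = x n := by
  simp [xiPlus, hn]

theorem intCast_mul_xiPlus (ℓ m : ℤ) : (m : ℂ) * xiPlus x (ℓ, m) = xiPlus x (ℓ, m) := by
  rcases eq_or_ne m 1 with rfl | hm
  · simp
  · rw [xiPlus_of_snd_ne_one hm, mul_zero]

theorem summable_norm_sq_xiPlus (hx : Summable (fun n : ℕ => x (n + 1) ^ 2)) :
    Summable (fun p : ℤ × ℤ => ‖xiPlus x p‖ ^ 2) := by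
  let e : ℕ → ℤ × ℤ := fun n => ((n + 1 : ℕ), 1)
  have he : Function.Injective e := fun a b hab => by simpa [e] using hab
  have hsupp : ∀ p ∉ Set.range e, ‖xiPlus x p‖ ^ 2 = 0 := by
    rintro ⟨ℓ, m⟩ hp
    by_cases hm : m = 1
    · subst hm
      rw [xiPlus_of_fst_lt_one, norm_zero, sq, zero_mul]
      by_contra! hℓ
      exact hp ⟨(ℓ - 1).toNat, by simp [e]; omega⟩
    · rw [xiPlus_of_snd_ne_one hm, norm_zero, sq, zero_mul]
  refine (he.summable_iff hsupp).1 (hx.congr fun n => ?_)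
  change x (n + 1) ^ 2 = ‖xiPlus x ((n + 1 : ℕ), 1)‖ ^ 2
  rw [xiPlus_natCast _ n.succ_pos, Complex.norm_real, Real.norm_eq_abs, sq_abs]

theorem lowering_xiPlus_eq_zero (h2 : x 2 = 0)
    (hrec : ∀ ℓ : ℕ, 2 ≤ ℓ → x (ℓ + 1) = recCoeff ℓ * x (ℓ - 1)) {ℓ : ℤ} (hℓ : 1 ≤ ℓ) (m : ℤ) :
    C (ℓ + 1) * csqrt ((ℓ + m + 1) * (ℓ + m + 2)) * xiPlus x (ℓ + 1, m + 1)
      + C ℓ * csqrt ((ℓ - m - 1) * (ℓ - m)) * xiPlus x (ℓ - 1, m + 1) = 0 := by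
  rcases eq_or_ne m 0 with rfl | hm
  swap
  · have hm' : m + 1 ≠ 1 := by omega
    rw [xiPlus_of_snd_ne_one hm', xiPlus_of_snd_ne_one hm']
    ring
  lift ℓ to ℕ using by omega
  simp only [add_zero, sub_zero, zero_add]
  have hup : xiPlus x ((ℓ : ℤ) + 1, 1) = x (ℓ + 1) := by
    exact_mod_cast xiPlus_natCast (ℓ + 1) (by omega)
  rw [hup]
  rcases eq_or_lt_of_le (show 1 ≤ ℓ by exact_mod_cast hℓ) with rfl | hℓ2
  · rw [xiPlus_of_fst_lt_one (by norm_num), h2]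
    simp
  · have hdown : xiPlus x ((ℓ : ℤ) - 1, 1) = x (ℓ - 1) := by
      rw [← xiPlus_natCast (ℓ - 1) (by omega)]
      congr
      omega
    rw [hdown, hrec ℓ hℓ2]
    push_cast
    linear_combination (x (ℓ - 1) : ℂ) * C_mul_csqrt_mul_recCoeff ℓ hℓ2.le

end XiPlus

/-- Let `(x_ℓ)` be the real sequence defined by `x 1 = 1`, `x 2 = 0` and, for `ℓ ≥ 2`,
`x (ℓ+1) = -[√(ℓ²-1)√(4(ℓ+1)²-1)/(√(4ℓ²-1)√((ℓ+1)²-1))]·[√((ℓ-1)ℓ)/√((ℓ+1)(ℓ+2))]·x (ℓ-1)`.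
Then `∑ x_ℓ² < ∞`, and the family `ξ⁺` with coefficients `x_ℓ` at `(ℓ,1)` (and `0`
elsewhere) is a nonzero square-summable family satisfying, coefficientwise,
`ρ(H₃)ξ⁺ = ξ⁺` and `ρ(F₋)ξ⁺ = 0`. -/
theorem xiplus_highest_weight_vector (x : ℕ → ℝ) (h1 : x 1 = 1) (h2 : x 2 = 0)
    (hrec : ∀ ℓ : ℕ, 2 ≤ ℓ →
      x (ℓ + 1) =
        -(Real.sqrt ((ℓ : ℝ) ^ 2 - 1) * Real.sqrt (4 * ((ℓ : ℝ) + 1) ^ 2 - 1) /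
            (Real.sqrt (4 * (ℓ : ℝ) ^ 2 - 1) * Real.sqrt (((ℓ : ℝ) + 1) ^ 2 - 1))) *
          (Real.sqrt (((ℓ : ℝ) - 1) * (ℓ : ℝ)) /
            Real.sqrt (((ℓ : ℝ) + 1) * ((ℓ : ℝ) + 2))) * x (ℓ - 1)) :
    Summable (fun ℓ : ℕ => x (ℓ + 1) ^ 2) ∧
    ∀ xiplus : ℤ × ℤ → ℂ,
      (∀ p : ℤ × ℤ, xiplus p = if 1 ≤ p.1 ∧ p.2 = 1 then ((x p.1.toNat : ℝ) : ℂ) else 0) →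
      (xiplus ≠ 0 ∧
        Summable (fun p : ℤ × ℤ => ‖xiplus p‖ ^ 2) ∧
        (∀ ℓ m : ℤ, 1 ≤ ℓ → |m| ≤ ℓ → (m : ℂ) * xiplus (ℓ, m) = xiplus (ℓ, m)) ∧
        (∀ ℓ m : ℤ, 1 ≤ ℓ → |m| ≤ ℓ →
          C (ℓ + 1) * csqrt ((ℓ + m + 1) * (ℓ + m + 2)) * xiplus (ℓ + 1, m + 1)
            + C ℓ * csqrt ((ℓ - m - 1) * (ℓ - m)) * xiplus (ℓ - 1, m + 1) = 0)) := by
  have hsum := summable_sq_of_recurrence hrec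
  refine ⟨hsum, fun xiplus hxi => ?_⟩
  obtain rfl : xiplus = xiPlus x := funext hxi
  refine ⟨fun h => ?_, summable_norm_sq_xiPlus hsum, fun ℓ m _ _ => intCast_mul_xiPlus ℓ m,
    fun ℓ m hℓ _ => lowering_xiPlus_eq_zero h2 hrec hℓ m⟩
  simpa [h1] using (xiPlus_natCast (x := x) 1 le_rfl).symm.trans (congrFun h (1, 1))

end
end

section
/- Let m₀ ≤ 0 be an integer, let ℓ₀ := 2 − m₀, and let (u_ℓ)_{ℓ ≥ ℓ₀−1} be strictly positive real numbers satisfying, for all ℓ ≥ ℓ₀, u_{ℓ+1} = u_{ℓ−1} · [ (ℓ²−1)·(4(ℓ+1)²−1)·(ℓ−m₀)·(ℓ−m₀+1) ] / [ (4ℓ²−1)·((ℓ+1)²−1)·(ℓ+m₀+1)·(ℓ+m₀) ]. Then the series ∑_{ℓ ≥ ℓ₀−1} u_ℓ diverges. -/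
/-!
Split the ratio `u (ℓ + 1) / u (ℓ - 1)` as `(c ℓ / c (ℓ + 1)) · w ℓ` with
`c ℓ = (ℓ² - 1) / (4ℓ² - 1) = |C_ℓ|²` and the weight factor
`w ℓ = (ℓ - m₀)(ℓ - m₀ + 1) / ((ℓ + m₀ + 1)(ℓ + m₀))`, which is `≥ 1` for `m₀ ≤ 0`.
Since `c` is increasing, `c (ℓ + 2) ≥ c (ℓ + 1)`, so `u (ℓ - 1) · c ℓ` is nondecreasing along
`ℓ = ℓ₀, ℓ₀ + 2, …`. As `c ≤ 1/4`, the terms `u (ℓ₀ - 1 + 2k)` stay above a positive constant,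
so they do not tend to `0` and the series diverges.
-/

open Filter Topology

lemma not_tendsto_zero_of_monotone_mul {v g : ℕ → ℝ}
    (hmono : Monotone fun k => v k * g k) (hpos : 0 < v 0 * g 0)
    (hg : IsBoundedUnder (· ≤ ·) atTop fun k => ‖g k‖) :
    ¬ Tendsto v atTop (𝓝 0) := fun hv =>
  (hmono.ge_of_tendsto (hv.zero_mul_isBoundedUnder_le hg) 0).not_gt hpos

/-- `|C_ℓ|²` for the coefficient `C_ℓ = i √(ℓ² - 1) / √(4ℓ² - 1)` of `ρ₁₀`. -/
noncomputable def normSqC (ℓ : ℝ) : ℝ := (ℓ ^ 2 - 1) / (4 * ℓ ^ 2 - 1)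

/-- The ratio `u (ℓ + 1) / u (ℓ - 1)` of the recurrence, for the weight `m`. -/
noncomputable def recRatio (ℓ m : ℝ) : ℝ :=
  ((ℓ ^ 2 - 1) * (4 * (ℓ + 1) ^ 2 - 1) * (ℓ - m) * (ℓ - m + 1)) /
    ((4 * ℓ ^ 2 - 1) * ((ℓ + 1) ^ 2 - 1) * (ℓ + m + 1) * (ℓ + m))

lemma normSqC_pos {ℓ : ℝ} (hℓ : 1 < ℓ) : 0 < normSqC ℓ := by
  unfold normSqC
  apply div_pos <;> nlinarith

lemma normSqC_nonneg {ℓ : ℝ} (hℓ : 1 ≤ ℓ) : 0 ≤ normSqC ℓ := by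
  unfold normSqC
  apply div_nonneg <;> nlinarith

lemma normSqC_le_quarter {ℓ : ℝ} (hℓ : 1 / 2 < ℓ) : normSqC ℓ ≤ 1 / 4 := by
  unfold normSqC
  rw [div_le_iff₀ (by nlinarith)]
  linarith

lemma normSqC_monotoneOn : MonotoneOn normSqC (Set.Ioi (1 / 2)) := by
  intro a ha b hb hab
  simp only [Set.mem_Ioi] at ha hb
  unfold normSqC
  rw [div_le_div_iff₀ (by nlinarith) (by nlinarith)]
  nlinarith [mul_le_mul hab hab (by linarith) (by linarith)]

lemma recRatio_eq (ℓ m : ℝ) :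
    recRatio ℓ m = normSqC ℓ / normSqC (ℓ + 1) *
      ((ℓ - m) * (ℓ - m + 1) / ((ℓ + m + 1) * (ℓ + m))) := by
  unfold recRatio normSqC
  simp only [div_eq_mul_inv, mul_inv, inv_inv]
  ring

lemma one_le_weightFactor {ℓ m : ℝ} (hm : m ≤ 0) (hℓm : 0 < ℓ + m) :
    1 ≤ (ℓ - m) * (ℓ - m + 1) / ((ℓ + m + 1) * (ℓ + m)) := by
  rw [one_le_div (by positivity)]
  nlinarith

lemma normSqC_div_le_recRatio {ℓ m : ℝ} (hℓ : 1 ≤ ℓ) (hm : m ≤ 0) (hℓm : 0 < ℓ + m) :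
    normSqC ℓ / normSqC (ℓ + 1) ≤ recRatio ℓ m := by
  rw [recRatio_eq]
  exact le_mul_of_one_le_right
    (div_nonneg (normSqC_nonneg hℓ) (normSqC_nonneg (by linarith))) (one_le_weightFactor hm hℓm)

lemma monotone_mul_normSqC {u : ℤ → ℝ} {m ℓ₀ : ℤ} (hm : m ≤ 0) (hℓ₀ : 0 < ℓ₀ + m)
    (hnonneg : ∀ k : ℕ, 0 ≤ u (ℓ₀ - 1 + 2 * k))
    (hrec : ∀ ℓ : ℤ, ℓ₀ ≤ ℓ → u (ℓ + 1) = u (ℓ - 1) * recRatio ℓ m) :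
    Monotone fun k : ℕ => u (ℓ₀ - 1 + 2 * k) * normSqC (ℓ₀ + 2 * k : ℤ) := by
  refine monotone_nat_of_le_succ fun k => ?_
  set ℓ : ℤ := ℓ₀ + 2 * k with hℓ
  have hℓm : (0 : ℝ) < ℓ + m := by exact_mod_cast (by omega : 0 < ℓ + m)
  have hmR : (m : ℝ) ≤ 0 := by exact_mod_cast hm
  have hℓ₁ : (1 : ℝ) ≤ ℓ := by exact_mod_cast (by omega : 1 ≤ ℓ)
  have hc₁ : 0 < normSqC (ℓ + 1) := normSqC_pos (by linarith)
  have hc₂ : normSqC (ℓ + 1) ≤ normSqC (ℓ + 2) :=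
    normSqC_monotoneOn (by norm_num; linarith) (by norm_num; linarith) (by linarith)
  have hu : u (ℓ₀ - 1 + 2 * ↑(k + 1)) = u (ℓ - 1) * recRatio ℓ m := by
    rw [← hrec ℓ (by omega)]; congr 1; omega
  have hc : ((ℓ₀ + 2 * ↑(k + 1) : ℤ) : ℝ) = ℓ + 2 := by rw [hℓ]; push_cast; ring
  have hprev : ℓ₀ - 1 + 2 * (k : ℤ) = ℓ - 1 := by omega
  simp only [hu, hc, hprev]
  calc u (ℓ - 1) * normSqC ℓ
      = u (ℓ - 1) * (normSqC ℓ / normSqC (ℓ + 1)) * normSqC (ℓ + 1) := by field_simp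
    _ ≤ u (ℓ - 1) * recRatio ℓ m * normSqC (ℓ + 2) := by
      have hu₀ : 0 ≤ u (ℓ - 1) := hprev ▸ hnonneg k
      have hr := normSqC_div_le_recRatio hℓ₁ hmR hℓm
      have hr₀ : 0 ≤ recRatio ℓ m := (div_nonneg (normSqC_nonneg hℓ₁) hc₁.le).trans hr
      gcongr

/-- Let `m₀ ≤ 0` be an integer, `ℓ₀ = 2 - m₀`, and let `(u_ℓ)_{ℓ ≥ ℓ₀ - 1}` be strictly
positive reals with
`u (ℓ+1) = u (ℓ-1) · [(ℓ²-1)(4(ℓ+1)²-1)(ℓ-m₀)(ℓ-m₀+1)] / [(4ℓ²-1)((ℓ+1)²-1)(ℓ+m₀+1)(ℓ+m₀)]`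
for all `ℓ ≥ ℓ₀`.  Then `∑_{ℓ ≥ ℓ₀ - 1} u ℓ` diverges: `ρ₁₀` restricted to `so(2,1)` has
no highest-weight vector with `H₃`-eigenvalue `m₀ ≤ 0`. -/
theorem no_highest_weight_vector_for_nonpositive_weight (m0 : ℤ) (hm0 : m0 ≤ 0)
    (u : ℤ → ℝ) (hpos : ∀ ℓ : ℤ, 2 - m0 - 1 ≤ ℓ → 0 < u ℓ)
    (hrec : ∀ ℓ : ℤ, 2 - m0 ≤ ℓ →
      u (ℓ + 1) = u (ℓ - 1) *
        ((((ℓ : ℝ) ^ 2 - 1) * (4 * ((ℓ : ℝ) + 1) ^ 2 - 1) *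
            ((ℓ : ℝ) - (m0 : ℝ)) * ((ℓ : ℝ) - (m0 : ℝ) + 1)) /
          ((4 * (ℓ : ℝ) ^ 2 - 1) * (((ℓ : ℝ) + 1) ^ 2 - 1) *
            ((ℓ : ℝ) + (m0 : ℝ) + 1) * ((ℓ : ℝ) + (m0 : ℝ))))) :
    ¬ Summable (fun n : ℕ => u (2 - m0 - 1 + n)) := by
  intro hs
  have hℓ : ∀ k : ℕ, (2 : ℝ) ≤ ((2 - m0 + 2 * k : ℤ) : ℝ) := fun k => by
    exact_mod_cast (by omega : 2 ≤ 2 - m0 + 2 * (k : ℤ))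
  have hmono := monotone_mul_normSqC (u := u) hm0 (by omega)
    (fun k => (hpos _ (by omega)).le) hrec
  have hbdd : IsBoundedUnder (· ≤ ·) atTop fun k : ℕ => ‖normSqC (2 - m0 + 2 * k : ℤ)‖ :=
    isBoundedUnder_of ⟨1 / 4, fun k => by
      rw [Real.norm_of_nonneg (normSqC_nonneg (by linarith [hℓ k]))]
      exact normSqC_le_quarter (by linarith [hℓ k])⟩
  refine not_tendsto_zero_of_monotone_mul hmono
    (mul_pos (hpos _ (by omega)) (normSqC_pos (by linarith [hℓ 0]))) hbdd ?_
  simpa [Function.comp_def] using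
    (hs.comp_injective (mul_right_injective₀ two_ne_zero)).tendsto_atTop_zero
end
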